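/- arXiv:1902.06575 — 2 statements merged into one kernel-verified Lean document; each statement's English description precedes it below -/
import Mathlib

section
/- Every finite directed acyclic graph G has a unique minimal spanning subgraph with the same reachability relation as G; its edge set consists exactly of the non-transitive edges of G, i.e., the edges (u,v) such that there is no directed path from u to v of length at least 2. -/
/-!
A path from `a` to `b` can be rerouted along non-transitive edges only: if its first edge
`a → c` is transitive, witnessed by `a → w →⁺ c`, the path is split at `w`, and both pieces
`a ⇝ w` and `w ⇝ b` are shorter in the order that compares targets along reachability and,
for a fixed target, sources against reachability. In a finite DAG both orders are
well-founded. Conversely, if `E' ⊆ E` has the reachability of `E`, a non-transitive edge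
`a → b` of `E` is an `E'`-path `a → c ⇝ b`, and `c ≠ b` would make `a → c →⁺ b` a witness
of transitivity, so `a → b` is an edge of `E'`.
-/

open Function

namespace Relation

variable {V : Type*} {E E' : V → V → Prop} {a b : V}

def TransReduction (E : V → V → Prop) (x y : V) : Prop :=
  E x y ∧ ¬ ∃ w, E x w ∧ TransGen E w y

theorem reflTransGen_transReduction_of_reflTransGen (hwf : WellFounded (TransGen E))
    (hwf' : WellFounded (swap (TransGen E))) (h : ReflTransGen E a b) :
    ReflTransGen (TransReduction E) a b := by
  induction b using hwf.induction generalizing a with | _ b ihb =>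
  induction a using hwf'.induction with | _ a iha =>
  rcases h.cases_head with rfl | ⟨c, hac, hcb⟩
  · exact .refl
  by_cases htrans : ∃ w, E a w ∧ TransGen E w c
  · obtain ⟨w, haw, hwc⟩ := htrans
    have hwb : TransGen E w b := hwc.trans_left hcb
    exact (ihb w hwb (.single haw)).trans (iha w (.single haw) hwb.to_reflTransGen)
  · exact .head ⟨hac, htrans⟩ (iha c (.single hac) hcb)

theorem reflTransGen_transReduction_iff (hwf : WellFounded (TransGen E))
    (hwf' : WellFounded (swap (TransGen E))) :
    ReflTransGen (TransReduction E) a b ↔ ReflTransGen E a b :=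
  ⟨ReflTransGen.mono (fun _ _ => And.left) _ _,
    reflTransGen_transReduction_of_reflTransGen hwf hwf'⟩

theorem transReduction_le (hle : E' ≤ E) (hreach : E ≤ ReflTransGen E') :
    TransReduction E ≤ E' := by
  rintro a b ⟨hab, hnontrans⟩
  rcases (hreach a b hab).cases_head with rfl | ⟨c, hac, hcb⟩
  · exact absurd ⟨a, hab, .single hab⟩ hnontrans
  rcases (ReflTransGen.mono hle _ _ hcb).cases_head with rfl | ⟨d, hcd, hdb⟩
  · exact hac
  · exact absurd ⟨c, hle a c hac, .head' hcd hdb⟩ hnontrans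

end Relation

open Relation

/-- Every finite DAG has a unique minimal spanning subgraph with the same reachability
relation: the subgraph of non-transitive edges has the same reachability as G, and it
is contained in every spanning subgraph of G with the same reachability relation. -/
theorem stmt4 {V : Type} [Fintype V] (E : V → V → Prop)
    (hacyc : ∀ v, ¬ Relation.TransGen E v v) :
    (∀ a b, Relation.ReflTransGen
        (fun x y => E x y ∧ ¬ ∃ w, E x w ∧ Relation.TransGen E w y) a b ↔
        Relation.ReflTransGen E a b) ∧
    (∀ E' : V → V → Prop, (∀ a b, E' a b → E a b) →
      (∀ a b, Relation.ReflTransGen E' a b ↔ Relation.ReflTransGen E a b) →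
      ∀ a b, (E a b ∧ ¬ ∃ w, E a w ∧ Relation.TransGen E w b) → E' a b) := by
  have : Std.Irrefl (TransGen E) := ⟨hacyc⟩
  refine ⟨fun a b => reflTransGen_transReduction_iff
      (Finite.wellFounded_of_trans_of_irrefl _) (Finite.wellFounded_of_trans_of_irrefl _), ?_⟩
  intro E' hle hiff
  exact transReduction_le hle fun a b hab => (hiff a b).2 (.single hab)
end

section
/- Let C be a directed cycle (as an edge sequence) in a directed graph whose edge set is partitioned into two classes, 'old' edges forming an acyclic graph G and 'new' edges, where every new edge (u,v) satisfies y(u) < y(v) for a fixed function y on the endpoints of new edges, and every endpoint u of a new edge satisfies: for every nonempty directed path of old edges from u to a vertex w that is an endpoint of a new edge, y(u) < y(w). Then no such directed cycle C can exist; i.e., the union graph is acyclic. -/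
/-! Let `S` be the set of endpoints of new edges. Walking along a mixed path that starts in `S`,
remember the last vertex of `S` visited: `y` never decreases from one such checkpoint to the next,
since consecutive checkpoints are joined by an old path or by a new edge. Hence `y` is monotone
along mixed paths between vertices of `S`. A cycle of old edges alone is excluded by acyclicity of
`G`; a cycle through a new edge `a → b` gives a mixed path from `b` back to `a`, so
`y b ≤ y a < y b`. -/

namespace Relation

variable {α β : Type*} {r s : α → α → Prop}

theorem TransGen.left_or_exists_right_of_sup {a b : α} (h : TransGen (r ⊔ s) a b) :
    TransGen r a b ∨ ∃ c d, s c d ∧ ReflTransGen (r ⊔ s) a c ∧ ReflTransGen (r ⊔ s) d b := by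
  induction h with
  | single hab =>
    rcases hab with hr | hs
    · exact .inl (.single hr)
    · exact .inr ⟨_, _, hs, .refl, .refl⟩
  | tail hab hbc ih =>
    rcases ih with hr | ⟨c, d, hcd, hac, hdb⟩
    · rcases hbc with hr' | hs
      · exact .inl (hr.tail hr')
      · exact .inr ⟨_, _, hs, hab.to_reflTransGen, .refl⟩
    · exact .inr ⟨c, d, hcd, hac, hdb.tail hbc⟩

variable [Preorder β] {f : α → β} {S : Set α}

theorem ReflTransGen.exists_checkpoint (hsS : ∀ a b, s a b → a ∈ S ∧ b ∈ S)
    (hs : ∀ a b, s a b → f a ≤ f b)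
    (hr : ∀ a b, a ∈ S → b ∈ S → ReflTransGen r a b → f a ≤ f b)
    {a u : α} (ha : a ∈ S) (h : ReflTransGen (r ⊔ s) a u) :
    ∃ c ∈ S, f a ≤ f c ∧ ReflTransGen r c u := by
  induction h with
  | refl => exact ⟨a, ha, le_rfl, .refl⟩
  | @tail u v _ huv ih =>
    obtain ⟨c, hc, hac, hcu⟩ := ih
    rcases huv with huv | huv
    · exact ⟨c, hc, hac, hcu.tail huv⟩
    · obtain ⟨hu, hv⟩ := hsS u v huv
      exact ⟨v, hv, hac.trans ((hr c u hc hu hcu).trans (hs u v huv)), .refl⟩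

theorem ReflTransGen.map_le_of_sup (hsS : ∀ a b, s a b → a ∈ S ∧ b ∈ S)
    (hs : ∀ a b, s a b → f a ≤ f b)
    (hr : ∀ a b, a ∈ S → b ∈ S → ReflTransGen r a b → f a ≤ f b)
    {a b : α} (ha : a ∈ S) (hb : b ∈ S) (h : ReflTransGen (r ⊔ s) a b) : f a ≤ f b := by
  obtain ⟨c, hc, hac, hcb⟩ := h.exists_checkpoint hsS hs hr ha
  exact hac.trans (hr c b hc hb hcb)

end Relation

theorem stmt13_general {V : Type} (Eold Enew : V → V → Prop) (y : V → ℝ)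
    (hold : ∀ v, ¬ Relation.TransGen Eold v v)
    (hnew : ∀ u v, Enew u v → y u < y v)
    (hmix : ∀ u w, (∃ a, Enew u a ∨ Enew a u) → (∃ a, Enew w a ∨ Enew a w) →
      Relation.TransGen Eold u w → y u < y w) :
    ∀ v, ¬ Relation.TransGen (fun a b => Eold a b ∨ Enew a b) v v := by
  intro v hv
  rcases Relation.TransGen.left_or_exists_right_of_sup (r := Eold) (s := Enew) hv with
    hv | ⟨a, b, hab, hva, hbv⟩
  · exact hold v hv
  have hsS : ∀ a b, Enew a b → (∃ c, Enew a c ∨ Enew c a) ∧ (∃ c, Enew b c ∨ Enew c b) :=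
    fun a b h => ⟨⟨b, .inl h⟩, ⟨a, .inr h⟩⟩
  have hold_le : ∀ u w, (∃ c, Enew u c ∨ Enew c u) → (∃ c, Enew w c ∨ Enew c w) →
      Relation.ReflTransGen Eold u w → y u ≤ y w := by
    intro u w hu hw huw
    rcases Relation.reflTransGen_iff_eq_or_transGen.mp huw with rfl | huw
    · exact le_rfl
    · exact (hmix u w hu hw huw).le
  have hba : y b ≤ y a := (hbv.trans hva).map_le_of_sup (S := {u | ∃ c, Enew u c ∨ Enew c u})
    hsS (fun u w h => (hnew u w h).le) hold_le (hsS a b hab).2 (hsS a b hab).1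
  exact (hnew a b hab).not_ge hba

/-- If the old edges form an acyclic graph, every new edge strictly increases y, and
every nonempty old-edge path between endpoints of new edges strictly increases y, then
the union of old and new edges is acyclic. -/
theorem stmt13 {V : Type} [Fintype V] (Eold Enew : V → V → Prop) (y : V → ℝ)
    (hold : ∀ v, ¬ Relation.TransGen Eold v v)
    (hnew : ∀ u v, Enew u v → y u < y v)
    (hmix : ∀ u w, (∃ a, Enew u a ∨ Enew a u) → (∃ a, Enew w a ∨ Enew a w) →
      Relation.TransGen Eold u w → y u < y w) :
    ∀ v, ¬ Relation.TransGen (fun a b => Eold a b ∨ Enew a b) v v :=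
  stmt13_general Eold Enew y hold hnew hmix
end
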